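/- Let N ≥ 2 be an integer, p ∈ (0,1) with N p(1−p) ≥ 2, and let w ∼ Bin(N−1, p). Then E[ ( log(1 + 1/(w+1)) + log(1 + 1/(N−w)) − 1/(N p(1−p)) )² ] ≤ (3p³ + 3(1−p)³ + 2p² + 2(1−p)²) / (N³ p³ (1−p)³). -/

import Mathlib

/-!
Write `a = 1/(w+1)`, `b = 1/(N-w)`, `λ = 1/(Np)`, `ν = 1/(N(1-p))`, so that `1/(Np(1-p)) = λ + ν`.
Since `0 ≤ log (1 + a) ≤ a`, replacing the logarithms by `a` and `b` costs at most
`2(λ + ν)(a - log (1 + a) + b - log (1 + b))`, and `a - log (1 + a) ≤ 1/((w+1)(w+2))`.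
What is left is `(a - λ)² + (b - ν)² + 2(a - λ)(b - ν)`. Up to the factor `N(N+1)p²`, dividing the
weight of `Bin(N-1, p)` at `w` by `(w+1)(w+2)` gives the weight of `Bin(N+1, p)` at `w+2`; so
`(a - λ)² ≤ 2λ²(w+1-Np)²/((w+1)(w+2))` is controlled by a variance of `Bin(N+1, p)`, and `b` is
handled the same way after `w ↦ N-1-w`, `p ↦ 1-p`. As `(w+1) + (N-w) = N+1`, `ab = (a+b)/(N+1)`,
so the cross term is affine in `a` and `b`, whose means are `(1 - (1-p)^N)/(Np)` and
`(1 - p^N)/(N(1-p))`. The tails `(1-p)^N ≤ exp (-Np)` and `p^N` are small because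
`Np(1-p) ≥ 2` forces `Np ≥ 2`, `N(1-p) ≥ 2` and `N ≥ 8`.
-/

/-- The probability mass function of the binomial distribution `Bin(N, p)` at `j`. -/
noncomputable def binomPMF (N : ℕ) (p : ℝ) (j : ℕ) : ℝ :=
  (N.choose j : ℝ) * p ^ j * (1 - p) ^ (N - j)

open Finset Real

lemma one_div_sub_one_div_sq_le {u c : ℝ} (hu : 1 ≤ u) (hc : 0 < c) :
    (1 / u - 1 / c) ^ 2 ≤ 2 / c ^ 2 * ((u - c) ^ 2 / (u * (u + 1))) := by
  have hu0 : 0 < u := by linarith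
  have h : 2 / c ^ 2 * ((u - c) ^ 2 / (u * (u + 1))) - (1 / u - 1 / c) ^ 2
      = (u - c) ^ 2 * (u - 1) / (c ^ 2 * u ^ 2 * (u + 1)) := by
    field_simp
    ring
  have h' : 0 ≤ (u - c) ^ 2 * (u - 1) / (c ^ 2 * u ^ 2 * (u + 1)) :=
    div_nonneg (mul_nonneg (sq_nonneg _) (by linarith)) (by positivity)
  linarith

lemma one_div_sub_log_one_add_one_div_le {u : ℝ} (hu : 0 < u) :
    1 / u - log (1 + 1 / u) ≤ 1 / (u * (u + 1)) := by
  have h := one_sub_inv_le_log_of_pos (by positivity : 0 < 1 + 1 / u)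
  have h' : 1 - (1 + 1 / u)⁻¹ = 1 / u - 1 / (u * (u + 1)) := by field_simp; ring
  linarith

lemma sq_log_add_log_sub_le {a b : ℝ} (ha : 0 ≤ a) (hb : 0 ≤ b) (x y : ℝ) :
    (log (1 + a) + log (1 + b) - (x + y)) ^ 2
      ≤ (a - x) ^ 2 + (b - y) ^ 2 + 2 * ((a - x) * (b - y))
        + 2 * (x + y) * ((a - log (1 + a)) + (b - log (1 + b))) := by
  have hla := log_le_sub_one_of_pos (by linarith : 0 < 1 + a)
  have hlb := log_le_sub_one_of_pos (by linarith : 0 < 1 + b)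
  have hla0 := log_nonneg (by linarith : 1 ≤ 1 + a)
  have hlb0 := log_nonneg (by linarith : 1 ≤ 1 + b)
  -- with `L` the sum of the logarithms and `S = a + b`, RHS - LHS is `(S - L) * (S + L) ≥ 0`
  nlinarith [mul_nonneg (by linarith : 0 ≤ a + b - (log (1 + a) + log (1 + b)))
    (by linarith : 0 ≤ a + b + (log (1 + a) + log (1 + b)))]

lemma nine_mul_sq_le_eight_mul_exp {x : ℝ} (hx : 2 ≤ x) : 9 * x ^ 2 ≤ 8 * exp x := by
  have h := sum_le_exp_of_nonneg (by linarith : (0 : ℝ) ≤ x) 4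
  simp only [sum_range_succ, sum_range_zero, Nat.factorial] at h
  norm_num at h
  nlinarith [mul_nonneg (sub_nonneg.mpr hx) (sq_nonneg (x - 2))]

lemma cast_mul_succ_mul_sq_mul_one_sub_pow_le_one {M : ℕ} {p : ℝ} (hp1 : p ≤ 1)
    (hM : 8 ≤ (M : ℝ)) (hMp : 2 ≤ M * p) :
    (M : ℝ) * (M + 1) * p ^ 2 * (1 - p) ^ M ≤ 1 := by
  have hpow : (1 - p) ^ M ≤ exp (-(M * p)) := by
    calc (1 - p) ^ M ≤ exp (-p) ^ M :=
          pow_le_pow_left₀ (sub_nonneg.mpr hp1) (one_sub_le_exp_neg p) M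
      _ = exp (-(M * p)) := by rw [← exp_nat_mul]; ring_nf
  calc (M : ℝ) * (M + 1) * p ^ 2 * (1 - p) ^ M ≤ 9 / 8 * (M * p) ^ 2 * exp (-(M * p)) := by
        apply mul_le_mul _ hpow (pow_nonneg (sub_nonneg.mpr hp1) M) (by positivity)
        nlinarith [sq_nonneg p]
    _ ≤ exp (M * p) * exp (-(M * p)) := by
        gcongr
        linarith [nine_mul_sq_le_eight_mul_exp hMp]
    _ = 1 := by rw [← exp_add, add_neg_cancel, exp_zero]

lemma sum_of_moment_bounds_le {R p q P Q : ℝ} (hR : 0 < R) (hp : 0 < p) (hq : 0 < q)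
    (hpq : p + q = 1) (hP : R * (R + 1) * q ^ 2 * P ≤ 1) (hQ : R * (R + 1) * p ^ 2 * Q ≤ 1) :
    3 / (R ^ 3 * p ^ 3) + 3 / (R ^ 3 * q ^ 3) + 2 * ((P + Q) / (R ^ 2 * p * q))
        + 2 * (1 / (R * p) + 1 / (R * q)) * (1 / (R * (R + 1) * p ^ 2) + 1 / (R * (R + 1) * q ^ 2))
      ≤ (3 * p ^ 3 + 3 * q ^ 3 + 2 * p ^ 2 + 2 * q ^ 2) / (R ^ 3 * p ^ 3 * q ^ 3) := by
  -- the tail left over from the cross term and the logarithm correction together cost `2/(R³p³q)`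
  have side : ∀ {p q Q : ℝ}, 0 < p → 0 < q → R * (R + 1) * p ^ 2 * Q ≤ 1 →
      2 * Q / (R ^ 2 * p * q) + 2 / (R * p * q) * (1 / (R * (R + 1) * p ^ 2))
        ≤ 2 / (R ^ 3 * p ^ 3 * q) := fun {p q Q} hp hq hQ => by
    calc 2 * Q / (R ^ 2 * p * q) + 2 / (R * p * q) * (1 / (R * (R + 1) * p ^ 2))
        = 2 * (R * (R + 1) * p ^ 2 * Q + R) / (R ^ 3 * (R + 1) * p ^ 3 * q) := by
          field_simp
      _ ≤ 2 * (1 + R) / (R ^ 3 * (R + 1) * p ^ 3 * q) := by gcongr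
      _ = 2 / (R ^ 3 * p ^ 3 * q) := by
          field_simp
          ring
  have hm : 1 / (R * p) + 1 / (R * q) = 1 / (R * p * q) := by
    field_simp
    linarith
  have htotal :
      3 / (R ^ 3 * p ^ 3) + 2 / (R ^ 3 * p ^ 3 * q) + (3 / (R ^ 3 * q ^ 3) + 2 / (R ^ 3 * q ^ 3 * p))
        = (3 * p ^ 3 + 3 * q ^ 3 + 2 * p ^ 2 + 2 * q ^ 2) / (R ^ 3 * p ^ 3 * q ^ 3) := by
    field_simp
    ring
  rw [← htotal, hm]
  linear_combination side hp hq hQ + side hq hp hP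

noncomputable def binomExpect (n : ℕ) (p : ℝ) (f : ℕ → ℝ) : ℝ :=
  ∑ j ∈ range (n + 1), binomPMF n p j * f j

section Binomial

variable {n : ℕ} {p : ℝ}

lemma binomPMF_nonneg (hp : 0 ≤ p) (hp1 : p ≤ 1) (j : ℕ) : 0 ≤ binomPMF n p j := by
  have : 0 ≤ 1 - p := sub_nonneg.mpr hp1
  unfold binomPMF
  positivity

lemma sum_binomPMF (n : ℕ) (p : ℝ) : ∑ j ∈ range (n + 1), binomPMF n p j = 1 := by
  have h := add_pow p (1 - p) n
  rw [add_sub_cancel, one_pow] at h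
  rw [h]
  exact sum_congr rfl fun j _ => by unfold binomPMF; ring

lemma binomPMF_sub {j : ℕ} (hj : j ≤ n) : binomPMF n p (n - j) = binomPMF n (1 - p) j := by
  unfold binomPMF
  rw [Nat.choose_symm hj, Nat.sub_sub_self hj, sub_sub_cancel]
  ring

lemma succ_mul_binomPMF_succ (n j : ℕ) (p : ℝ) :
    ((j : ℝ) + 1) * binomPMF (n + 1) p (j + 1) = ((n : ℝ) + 1) * p * binomPMF n p j := by
  have h : ((n : ℝ) + 1) * n.choose j = (n + 1).choose (j + 1) * ((j : ℝ) + 1) := by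
    exact_mod_cast Nat.add_one_mul_choose_eq n j
  unfold binomPMF
  rw [Nat.add_sub_add_right]
  linear_combination -(p ^ (j + 1) * (1 - p) ^ (n - j)) * h

lemma binomPMF_div_succ (hp : p ≠ 0) (n j : ℕ) :
    binomPMF n p j / ((j : ℝ) + 1) = binomPMF (n + 1) p (j + 1) / (((n : ℝ) + 1) * p) := by
  rw [div_eq_div_iff (by positivity) (mul_ne_zero (by positivity) hp)]
  linear_combination -(succ_mul_binomPMF_succ n j p)

lemma binomPMF_div_succ_mul_succ (hp : p ≠ 0) (n j : ℕ) :
    binomPMF n p j / (((j : ℝ) + 1) * ((j : ℝ) + 2))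
      = binomPMF (n + 2) p (j + 2) / (((n : ℝ) + 1) * ((n : ℝ) + 2) * p ^ 2) := by
  have h : binomPMF (n + 1) p (j + 1) / ((j : ℝ) + 2)
      = binomPMF (n + 2) p (j + 2) / (((n : ℝ) + 2) * p) := by
    convert binomPMF_div_succ hp (n + 1) (j + 1) using 2 <;> push_cast <;> ring
  rw [← div_div, binomPMF_div_succ hp, div_right_comm, h]
  field_simp

lemma binomExpect_congr {f g : ℕ → ℝ} (h : ∀ j ≤ n, f j = g j) :
    binomExpect n p f = binomExpect n p g :=
  sum_congr rfl fun j hj => by rw [h j (Nat.lt_succ_iff.mp (mem_range.mp hj))]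

lemma binomExpect_mono (hp : 0 ≤ p) (hp1 : p ≤ 1) {f g : ℕ → ℝ} (h : ∀ j ≤ n, f j ≤ g j) :
    binomExpect n p f ≤ binomExpect n p g :=
  sum_le_sum fun j hj => mul_le_mul_of_nonneg_left (h j (Nat.lt_succ_iff.mp (mem_range.mp hj)))
    (binomPMF_nonneg hp hp1 j)

lemma binomExpect_add (f g : ℕ → ℝ) :
    binomExpect n p (fun j => f j + g j) = binomExpect n p f + binomExpect n p g := by
  simp only [binomExpect, mul_add, sum_add_distrib]

lemma binomExpect_const_mul (c : ℝ) (f : ℕ → ℝ) :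
    binomExpect n p (fun j => c * f j) = c * binomExpect n p f := by
  simp only [binomExpect, mul_sum, mul_left_comm]

lemma binomExpect_const (c : ℝ) : binomExpect n p (fun _ => c) = c := by
  rw [binomExpect, ← sum_mul, sum_binomPMF, one_mul]

lemma binomExpect_reflect (f : ℕ → ℝ) :
    binomExpect n p (fun j => f (n - j)) = binomExpect n (1 - p) f := by
  rw [binomExpect, ← sum_range_reflect]
  refine sum_congr rfl fun j hj => ?_
  have hj : j ≤ n := Nat.lt_succ_iff.mp (mem_range.mp hj)
  rw [Nat.add_sub_cancel, Nat.sub_sub_self hj, binomPMF_sub hj]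

lemma binomExpect_succ (f : ℕ → ℝ) :
    binomExpect (n + 1) p f
      = (1 - p) ^ (n + 1) * f 0 + ∑ j ∈ range (n + 1), binomPMF (n + 1) p (j + 1) * f (j + 1) := by
  rw [binomExpect, sum_range_succ', add_comm]
  simp [binomPMF]

lemma binomExpect_succ_mul (f : ℕ → ℝ) :
    binomExpect (n + 1) p (fun k => k * f k)
      = ((n : ℝ) + 1) * p * binomExpect n p (fun j => f (j + 1)) := by
  rw [binomExpect_succ, binomExpect, mul_sum]
  simp only [Nat.cast_zero, zero_mul, mul_zero, zero_add, Nat.cast_succ]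
  refine sum_congr rfl fun j _ => ?_
  linear_combination f (j + 1) * succ_mul_binomPMF_succ n j p

lemma binomExpect_natCast (n : ℕ) (p : ℝ) : binomExpect n p (fun k => (k : ℝ)) = n * p := by
  cases n with
  | zero => simp [binomExpect]
  | succ n =>
    have h := binomExpect_succ_mul (n := n) (p := p) fun _ => 1
    simp only [mul_one, binomExpect_const] at h
    rw [h]
    push_cast
    ring

lemma binomExpect_natCast_sq (n : ℕ) (p : ℝ) :
    binomExpect n p (fun k => (k : ℝ) ^ 2) = n * p * ((n - 1) * p + 1) := by
  cases n with
  | zero => simp [binomExpect]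
  | succ n =>
    have h := binomExpect_succ_mul (n := n) (p := p) fun k => (k : ℝ)
    simp only [← sq, Nat.cast_succ] at h
    rw [h, binomExpect_add, binomExpect_natCast, binomExpect_const]
    push_cast
    ring

lemma binomExpect_natCast_sub_sq (n : ℕ) (p c : ℝ) :
    binomExpect n p (fun k => ((k : ℝ) - c) ^ 2) = n * p * (1 - p) + (n * p - c) ^ 2 := by
  have h : ∀ k : ℕ, ((k : ℝ) - c) ^ 2 = (k : ℝ) ^ 2 + (-2 * c) * k + c ^ 2 := fun k => by ring
  simp only [h, binomExpect_add, binomExpect_const_mul, binomExpect_const, binomExpect_natCast_sq,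
    binomExpect_natCast]
  ring

lemma binomExpect_one_div_succ (hp : p ≠ 0) :
    binomExpect n p (fun j => 1 / ((j : ℝ) + 1))
      = (1 - (1 - p) ^ (n + 1)) / (((n : ℝ) + 1) * p) := by
  have htotal := binomExpect_succ (n := n) (p := p) fun _ => 1
  simp only [binomExpect_const, mul_one] at htotal
  rw [binomExpect, eq_div_iff (mul_ne_zero (by positivity) hp), sum_mul]
  calc ∑ j ∈ range (n + 1), binomPMF n p j * (1 / ((j : ℝ) + 1)) * (((n : ℝ) + 1) * p)
      = ∑ j ∈ range (n + 1), binomPMF (n + 1) p (j + 1) := by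
        refine sum_congr rfl fun j _ => ?_
        rw [mul_one_div, binomPMF_div_succ hp]
        field_simp [mul_ne_zero (by positivity : (n : ℝ) + 1 ≠ 0) hp]
    _ = 1 - (1 - p) ^ (n + 1) := by linarith

lemma binomExpect_div_succ_mul_succ_le (hp : 0 < p) (hp1 : p ≤ 1) {f : ℕ → ℝ}
    (hf : ∀ k, 0 ≤ f k) :
    binomExpect n p (fun j => f (j + 2) / (((j : ℝ) + 1) * ((j : ℝ) + 2)))
      ≤ binomExpect (n + 2) p f / (((n : ℝ) + 1) * ((n : ℝ) + 2) * p ^ 2) := by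
  have hdrop : ∑ j ∈ range (n + 1), binomPMF (n + 2) p (j + 2) * f (j + 2)
      ≤ binomExpect (n + 2) p f := by
    have h0 := mul_nonneg (binomPMF_nonneg hp.le hp1 (n := n + 2) 0) (hf 0)
    have h1 := mul_nonneg (binomPMF_nonneg hp.le hp1 (n := n + 2) 1) (hf 1)
    rw [binomExpect, sum_range_succ' _ (n + 2), sum_range_succ' _ (n + 1)]
    linarith
  calc binomExpect n p (fun j => f (j + 2) / (((j : ℝ) + 1) * ((j : ℝ) + 2)))
      = (∑ j ∈ range (n + 1), binomPMF (n + 2) p (j + 2) * f (j + 2))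
          / (((n : ℝ) + 1) * ((n : ℝ) + 2) * p ^ 2) := by
        rw [binomExpect, sum_div]
        refine sum_congr rfl fun j _ => ?_
        rw [mul_div_left_comm, binomPMF_div_succ_mul_succ hp.ne']
        ring
    _ ≤ _ := by gcongr

lemma binomExpect_one_div_succ_sub_sq_le (hp : 0 < p) (hp1 : p ≤ 1)
    (hnp : 2 ≤ ((n : ℝ) + 1) * p) :
    binomExpect n p (fun j => (1 / ((j : ℝ) + 1) - 1 / (((n : ℝ) + 1) * p)) ^ 2)
      ≤ 3 / (((n : ℝ) + 1) ^ 3 * p ^ 3) := by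
  set c := ((n : ℝ) + 1) * p with hc
  have hc0 : 0 < c := by positivity
  calc binomExpect n p (fun j => (1 / ((j : ℝ) + 1) - 1 / c) ^ 2)
      ≤ binomExpect n p (fun j => 2 / c ^ 2 *
          ((fun k : ℕ => ((k : ℝ) - (1 + c)) ^ 2) (j + 2) / (((j : ℝ) + 1) * ((j : ℝ) + 2)))) := by
        refine binomExpect_mono hp.le hp1 fun j _ => ?_
        have h := one_div_sub_one_div_sq_le (u := (j : ℝ) + 1) (by simp) hc0
        convert h using 4 <;> push_cast <;> ring
    _ = 2 / c ^ 2 * binomExpect n p (fun j =>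
          (fun k : ℕ => ((k : ℝ) - (1 + c)) ^ 2) (j + 2) / (((j : ℝ) + 1) * ((j : ℝ) + 2))) :=
        binomExpect_const_mul _ _
    _ ≤ 2 / c ^ 2 * (binomExpect (n + 2) p (fun k => ((k : ℝ) - (1 + c)) ^ 2)
          / (((n : ℝ) + 1) * ((n : ℝ) + 2) * p ^ 2)) :=
        mul_le_mul_of_nonneg_left
          (binomExpect_div_succ_mul_succ_le (f := fun k : ℕ => ((k : ℝ) - (1 + c)) ^ 2) hp hp1
            fun _ => sq_nonneg _) (by positivity)
    _ = 2 * (1 - p) * (c + 1) / (((n : ℝ) + 1) ^ 3 * ((n : ℝ) + 2) * p ^ 4) := by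
        rw [binomExpect_natCast_sub_sq, hc]
        field_simp
        push_cast
        ring
    _ ≤ 3 / (((n : ℝ) + 1) ^ 3 * p ^ 3) := by
        rw [div_le_div_iff₀ (by positivity) (by positivity)]
        have : 0 < ((n : ℝ) + 1) ^ 3 * p ^ 3 := by positivity
        nlinarith [mul_nonneg hp.le hc0.le]

lemma binomExpect_one_div_succ_sub_log_le (hp : 0 < p) (hp1 : p ≤ 1) :
    binomExpect n p (fun j => 1 / ((j : ℝ) + 1) - log (1 + 1 / ((j : ℝ) + 1)))
      ≤ 1 / (((n : ℝ) + 1) * ((n : ℝ) + 2) * p ^ 2) := by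
  calc binomExpect n p (fun j => 1 / ((j : ℝ) + 1) - log (1 + 1 / ((j : ℝ) + 1)))
      ≤ binomExpect n p (fun j =>
          (fun _ => (1 : ℝ)) (j + 2) / (((j : ℝ) + 1) * ((j : ℝ) + 2))) := by
        refine binomExpect_mono hp.le hp1 fun j _ => ?_
        have h := one_div_sub_log_one_add_one_div_le (u := (j : ℝ) + 1) (by positivity)
        convert h using 3
        ring
    _ ≤ binomExpect (n + 2) p (fun _ => 1) / (((n : ℝ) + 1) * ((n : ℝ) + 2) * p ^ 2) :=
        binomExpect_div_succ_mul_succ_le hp hp1 fun _ => zero_le_one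
    _ = 1 / (((n : ℝ) + 1) * ((n : ℝ) + 2) * p ^ 2) := by rw [binomExpect_const]

lemma binomExpect_one_div_succ_rev_sub_sq_le (hp : 0 ≤ p) (hp1 : p < 1)
    (hnp : 2 ≤ ((n : ℝ) + 1) * (1 - p)) :
    binomExpect n p (fun j => (1 / (((n - j : ℕ) : ℝ) + 1) - 1 / (((n : ℝ) + 1) * (1 - p))) ^ 2)
      ≤ 3 / (((n : ℝ) + 1) ^ 3 * (1 - p) ^ 3) := by
  rw [binomExpect_reflect fun k => (1 / ((k : ℝ) + 1) - 1 / (((n : ℝ) + 1) * (1 - p))) ^ 2]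
  exact binomExpect_one_div_succ_sub_sq_le (by linarith) (by linarith) hnp

lemma binomExpect_one_div_succ_rev_sub_log_le (hp : 0 ≤ p) (hp1 : p < 1) :
    binomExpect n p (fun j => 1 / (((n - j : ℕ) : ℝ) + 1) - log (1 + 1 / (((n - j : ℕ) : ℝ) + 1)))
      ≤ 1 / (((n : ℝ) + 1) * ((n : ℝ) + 2) * (1 - p) ^ 2) := by
  rw [binomExpect_reflect fun k => 1 / ((k : ℝ) + 1) - log (1 + 1 / ((k : ℝ) + 1))]
  exact binomExpect_one_div_succ_sub_log_le (by linarith) (by linarith)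

lemma binomExpect_one_div_succ_sub_mul_rev_sub_le (hp : 0 < p) (hp1 : p < 1) :
    binomExpect n p (fun j => (1 / ((j : ℝ) + 1) - 1 / (((n : ℝ) + 1) * p))
        * (1 / (((n - j : ℕ) : ℝ) + 1) - 1 / (((n : ℝ) + 1) * (1 - p))))
      ≤ (p ^ (n + 1) + (1 - p) ^ (n + 1)) / (((n : ℝ) + 1) ^ 2 * p * (1 - p)) := by
  set R : ℝ := (n : ℝ) + 1 with hR
  have hR0 : 0 < R := by positivity
  have hq : 0 < 1 - p := by linarith
  -- `1/u * 1/v = (1/u + 1/v) / (u + v)` and `u + v = n + 2` for `u = j + 1`, `v = n - j + 1`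
  have hlin : ∀ j ≤ n,
      (1 / ((j : ℝ) + 1) - 1 / (R * p)) * (1 / (((n - j : ℕ) : ℝ) + 1) - 1 / (R * (1 - p)))
      = (1 / (R + 1) - 1 / (R * (1 - p))) * (1 / ((j : ℝ) + 1))
        + (1 / (R + 1) - 1 / (R * p)) * (1 / (((n - j : ℕ) : ℝ) + 1))
        + 1 / (R * p) * (1 / (R * (1 - p))) := fun j hj => by
    rw [Nat.cast_sub hj, hR]
    have : (n : ℝ) - j + 1 ≠ 0 := by
      have : (j : ℝ) ≤ n := by exact_mod_cast hj
      linarith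
    field_simp
    ring
  rw [binomExpect_congr hlin]
  simp only [binomExpect_add, binomExpect_const_mul, binomExpect_const]
  rw [binomExpect_one_div_succ hp.ne', binomExpect_reflect fun k => 1 / ((k : ℝ) + 1),
    binomExpect_one_div_succ hq.ne', sub_sub_cancel]
  set P := p ^ (n + 1)
  set Q := (1 - p) ^ (n + 1)
  have hP : 0 ≤ P := by positivity
  have hQ : 0 ≤ Q := by positivity
  calc (1 / (R + 1) - 1 / (R * (1 - p))) * ((1 - Q) / (R * p))
        + (1 / (R + 1) - 1 / (R * p)) * ((1 - P) / (R * (1 - p)))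
        + 1 / (R * p) * (1 / (R * (1 - p)))
      = ((R * p + 1) * Q + (R * (1 - p) + 1) * P - 1) / (R ^ 2 * (R + 1) * p * (1 - p)) := by
        field_simp
        ring
    _ ≤ (R + 1) * (P + Q) / (R ^ 2 * (R + 1) * p * (1 - p)) := by
        gcongr
        nlinarith [mul_nonneg (mul_nonneg hR0.le hq.le) hQ, mul_nonneg (mul_nonneg hR0.le hp.le) hP]
    _ = (P + Q) / (R ^ 2 * p * (1 - p)) := by
        field_simp

end Binomial

lemma binomExpect_log_sub_sq_le {n : ℕ} {p : ℝ} (hp : 0 < p) (hp1 : p < 1)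
    (hnp : 2 ≤ ((n : ℝ) + 1) * p * (1 - p)) :
    binomExpect n p (fun j => (log (1 + 1 / ((j : ℝ) + 1)) + log (1 + 1 / (((n - j : ℕ) : ℝ) + 1))
        - 1 / (((n : ℝ) + 1) * p * (1 - p))) ^ 2)
      ≤ (3 * p ^ 3 + 3 * (1 - p) ^ 3 + 2 * p ^ 2 + 2 * (1 - p) ^ 2)
          / (((n : ℝ) + 1) ^ 3 * p ^ 3 * (1 - p) ^ 3) := by
  have hq : 0 < 1 - p := by linarith
  have hn : 8 ≤ (n : ℝ) + 1 := by nlinarith [sq_nonneg (2 * p - 1)]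
  have hnp' : 2 ≤ ((n : ℝ) + 1) * p := by nlinarith
  have hnq : 2 ≤ ((n : ℝ) + 1) * (1 - p) := by nlinarith
  have htailq := cast_mul_succ_mul_sq_mul_one_sub_pow_le_one (M := n + 1) hp1.le
    (by push_cast; linarith) (by push_cast; linarith)
  have htailp := cast_mul_succ_mul_sq_mul_one_sub_pow_le_one (M := n + 1) (p := 1 - p)
    (by linarith) (by push_cast; linarith) (by push_cast; linarith)
  push_cast at htailp htailq
  rw [sub_sub_cancel] at htailp
  have hm : 1 / (((n : ℝ) + 1) * p * (1 - p))
      = 1 / (((n : ℝ) + 1) * p) + 1 / (((n : ℝ) + 1) * (1 - p)) := by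
    field_simp
    ring
  rw [hm]
  refine (binomExpect_mono hp.le hp1.le fun j _ =>
    sq_log_add_log_sub_le (by positivity) (by positivity) _ _).trans ?_
  simp only [binomExpect_add, binomExpect_const_mul]
  refine le_trans ?_ (sum_of_moment_bounds_le (by positivity) hp hq (by ring) htailp htailq)
  gcongr
  · exact binomExpect_one_div_succ_sub_sq_le hp hp1.le hnp'
  · exact binomExpect_one_div_succ_rev_sub_sq_le hp.le hp1 hnq
  · exact binomExpect_one_div_succ_sub_mul_rev_sub_le hp hp1
  · exact (binomExpect_one_div_succ_sub_log_le hp hp1.le).trans_eq (by ring)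
  · exact (binomExpect_one_div_succ_rev_sub_log_le hp.le hp1).trans_eq (by ring)

theorem binomial_log_second_moment_bound_general
    (N : ℕ) (p : ℝ) (hp : 0 < p) (hp1 : p < 1)
    (hNp : 2 ≤ (N : ℝ) * p * (1 - p)) :
    ∑ j ∈ Finset.range N, binomPMF (N - 1) p j *
        (Real.log (1 + 1 / ((j : ℝ) + 1)) + Real.log (1 + 1 / ((N : ℝ) - j))
          - 1 / ((N : ℝ) * p * (1 - p))) ^ 2
      ≤ (3 * p ^ 3 + 3 * (1 - p) ^ 3 + 2 * p ^ 2 + 2 * (1 - p) ^ 2)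
          / ((N : ℝ) ^ 3 * p ^ 3 * (1 - p) ^ 3) := by
  obtain _ | n := N
  · norm_num at hNp
  push_cast at hNp ⊢
  refine le_of_eq_of_le (binomExpect_congr fun j hj => ?_) (binomExpect_log_sub_sq_le hp hp1 hNp)
  rw [Nat.cast_sub hj, sub_add_eq_add_sub]

/-- second-moment bound for `w ~ Bin(N-1, p)` with `Np(1-p) ≥ 2`:
`E[(log(1 + 1/(w+1)) + log(1 + 1/(N-w)) - 1/(Np(1-p)))²]
  ≤ (3p³ + 3(1-p)³ + 2p² + 2(1-p)²) / (N³p³(1-p)³)`. -/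
theorem binomial_log_second_moment_bound
    (N : ℕ) (hN : 2 ≤ N) (p : ℝ) (hp : 0 < p) (hp1 : p < 1)
    (hNp : 2 ≤ (N : ℝ) * p * (1 - p)) :
    ∑ j ∈ Finset.range N, binomPMF (N - 1) p j *
        (Real.log (1 + 1 / ((j : ℝ) + 1)) + Real.log (1 + 1 / ((N : ℝ) - j))
          - 1 / ((N : ℝ) * p * (1 - p))) ^ 2
      ≤ (3 * p ^ 3 + 3 * (1 - p) ^ 3 + 2 * p ^ 2 + 2 * (1 - p) ^ 2)
          / ((N : ℝ) ^ 3 * p ^ 3 * (1 - p) ^ 3) :=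
  binomial_log_second_moment_bound_general N p hp hp1 hNp
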